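/- Let ℓ, m ≥ 3 be integers, α = ℓm−1, β = m. A finite sequence [n_1, …, n_k] of integers with |n_i| ≥ 2 for all i satisfies cf[n_1, …, n_k] = (β−α)/α if and only if it equals the length-ℓ sequence C with C_i = (−1)^i·2 for 1 ≤ i ≤ ℓ−1 and C_ℓ = (−1)^{ℓ−1}·(m−1), or it equals the length-(ℓ+m−3) sequence D with D_i = (−1)^i·2 for all i ≠ ℓ−1 and D_{ℓ−1} = (−1)^{ℓ−1}·3. -/

import Mathlib

/-!
For a sequence with all `|nᵢ| ≥ 2` the value of every tail lies in `(-1, 1)`, so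
`cf (n :: T) = v` forces `|1/v - n| < 1`: the head is one of the at most two integers
nearest to `1/v`, and the tail has value `1/v - n`. Write `v_ℓ = (β - α)/α`. Then
`1/v_{ℓ+1} = -2 - v_ℓ` with `v_ℓ ∈ (-1, 0)`, so for `ℓ ≥ 3` the head is `-2` and the negated
tail has value `v_{ℓ-1}`. At `ℓ = 2`, `1/v_2 = -3 + (m-2)/(m-1)` admits the heads `-2`
(tail value `1/(1-m)`, so the tail is `[1-m]`) and `-3` (tail value `(m-2)/(m-1)`, which only
the alternating sequence `2, -2, 2, …` of length `m - 2` attains).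
-/

/-- The continued fraction value `cf [n_1, …, n_k] = 1/(n_1 + 1/(n_2 + ⋯ + 1/n_k))`. -/
def cf : List ℤ → ℚ
  | [] => 0
  | n :: L => 1 / ((n : ℚ) + cf L)

section

variable {L T : List ℤ} {n : ℤ} {v : ℚ}

lemma cf_cons : cf (n :: T) = 1 / ((n : ℚ) + cf T) := rfl

lemma cf_map_neg (L : List ℤ) : cf (L.map Neg.neg) = -cf L := by
  induction L with
  | nil => simp [cf]
  | cons n T ih => rw [List.map_cons, cf_cons, cf_cons, ih, Int.cast_neg, ← neg_add, div_neg]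

lemma one_lt_abs_add_cf (hn : 2 ≤ |n|) (hT : |cf T| < 1) : 1 < |(n : ℚ) + cf T| := by
  have hn' : (2 : ℚ) ≤ |(n : ℚ)| := by exact_mod_cast hn
  linarith [abs_sub_abs_le_abs_add (n : ℚ) (cf T)]

lemma abs_cf_lt_one (hL : ∀ x ∈ L, 2 ≤ |x|) : |cf L| < 1 := by
  induction L with
  | nil => simp [cf]
  | cons n T ih =>
    obtain ⟨hn, hT⟩ := List.forall_mem_cons.mp hL
    have := one_lt_abs_add_cf hn (ih hT)
    rw [cf_cons, abs_div, abs_one, div_lt_one (by linarith)]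
    exact this

lemma cf_eq_zero_iff (hL : ∀ x ∈ L, 2 ≤ |x|) : cf L = 0 ↔ L = [] := by
  refine ⟨fun h => ?_, fun h => h ▸ rfl⟩
  cases L with
  | nil => rfl
  | cons n T =>
    obtain ⟨hn, hT⟩ := List.forall_mem_cons.mp hL
    have := one_lt_abs_add_cf hn (abs_cf_lt_one hT)
    rw [cf_cons, one_div, inv_eq_zero] at h
    norm_num [h] at this

lemma cf_tail_eq (h : cf (n :: T) = v) : cf T = 1 / v - n := by
  rw [← h, cf_cons, one_div_one_div, add_sub_cancel_left]

lemma head_mem_Ioo_of_cf_cons_eq (hT : ∀ x ∈ T, 2 ≤ |x|) (h : cf (n :: T) = v) {a b : ℤ}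
    (ha : (a : ℚ) ≤ 1 / v - 1) (hb : 1 / v + 1 ≤ b) : n ∈ Set.Ioo a b := by
  have := abs_cf_lt_one hT
  rw [cf_tail_eq h, abs_lt] at this
  constructor
  · exact_mod_cast (show (a : ℚ) < n by linarith)
  · exact_mod_cast (show (n : ℚ) < b by linarith)

lemma eq_singleton_of_cf_eq {c : ℤ} (hc : 2 ≤ |c|) (hL : ∀ x ∈ L, 2 ≤ |x|)
    (h : cf L = 1 / c) : L = [c] := by
  cases L with
  | nil => simp [cf, eq_comm] at h; simp [h] at hc
  | cons n T =>
    have hT := (List.forall_mem_cons.mp hL).2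
    have hnc : n = c := by
      obtain ⟨h1, h2⟩ :=
        head_mem_Ioo_of_cf_cons_eq (a := c - 1) (b := c + 1) hT h (by simp) (by simp)
      omega
    subst hnc
    have := cf_tail_eq h
    rw [one_div_one_div, sub_self, cf_eq_zero_iff hT] at this
    rw [this]

lemma forall_mem_map_neg : (∀ x ∈ L.map Neg.neg, 2 ≤ |x|) ↔ ∀ x ∈ L, 2 ≤ |x| := by
  simp only [List.forall_mem_map, abs_neg]

lemma map_neg_eq_iff : T.map Neg.neg = L ↔ T = L.map Neg.neg := by
  constructor <;> rintro rfl <;> simp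

end

def altTwos (k : ℕ) : List ℤ := List.ofFn fun j : Fin k => (-1) ^ (j : ℕ) * 2

lemma altTwos_succ (k : ℕ) : altTwos (k + 1) = 2 :: (altTwos k).map Neg.neg := by
  simp [altTwos, List.ofFn_succ, List.map_ofFn, Function.comp_def, pow_succ]

lemma cf_altTwos (k : ℕ) : cf (altTwos k) = k / (k + 1) := by
  induction k with
  | zero => simp [altTwos, cf]
  | succ k ih =>
    rw [altTwos_succ, cf_cons, cf_map_neg, ih]
    have hk : (2 : ℚ) + -(k / (k + 1)) = (k + 2) / (k + 1) := by field_simp; ring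
    push_cast
    rw [hk, one_div_div]
    ring

lemma eq_altTwos_of_cf_eq {k : ℕ} {L : List ℤ} (hL : ∀ x ∈ L, 2 ≤ |x|)
    (h : cf L = k / (k + 1)) : L = altTwos k := by
  induction k generalizing L with
  | zero => simpa [altTwos, cf_eq_zero_iff hL] using h
  | succ k ih =>
    cases L with
    | nil => exact absurd h.symm (by simp only [cf]; positivity)
    | cons n T =>
      obtain ⟨hn, hT⟩ := List.forall_mem_cons.mp hL
      have hv : 1 / (((k + 1 : ℕ) : ℚ) / ((k + 1 : ℕ) + 1)) = 1 + 1 / (k + 1) := by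
        push_cast; field_simp
      have hk : 1 / ((k : ℚ) + 1) ≤ 1 := div_le_one_of_le₀ (by simp) (by positivity)
      replace hn : n = 2 := by
        obtain ⟨h0, h3⟩ := head_mem_Ioo_of_cf_cons_eq (a := 0) (b := 3) hT h
          (by rw [hv]; push_cast; linarith [one_div_pos.mpr (k.cast_add_one_pos (α := ℚ))])
          (by rw [hv]; push_cast; linarith)
        rw [le_abs'] at hn
        omega
      subst hn
      have htail : cf (T.map Neg.neg) = k / (k + 1) := by
        rw [cf_map_neg, cf_tail_eq h, hv]
        field_simp
        ring
      rw [ih (forall_mem_map_neg.mpr hT) htail |> map_neg_eq_iff.mp, altTwos_succ]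

-- `seqC ℓ m = [C_1, …, C_ℓ]` and `seqD ℓ m = [D_1, …, D_{ℓ+m-3}]`: positions start at `0`.
def seqC (ℓ m : ℕ) : List ℤ :=
  List.ofFn fun j : Fin ℓ =>
    if (j : ℕ) = ℓ - 1 then (-1) ^ (ℓ - 1) * ((m : ℤ) - 1) else (-1) ^ ((j : ℕ) + 1) * 2

def seqD (ℓ m : ℕ) : List ℤ :=
  List.ofFn fun j : Fin (ℓ + m - 3) =>
    if (j : ℕ) = ℓ - 2 then (-1) ^ (ℓ - 1) * 3 else (-1) ^ ((j : ℕ) + 1) * 2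

/-- `(β - α)/α` with `α = ℓm - 1`, `β = m`. -/
def cfTarget (ℓ m : ℕ) : ℚ := ((m : ℚ) - ((ℓ : ℚ) * m - 1)) / ((ℓ : ℚ) * m - 1)

section

variable {ℓ m : ℕ}

lemma seqC_one : seqC 1 m = [(m : ℤ) - 1] := by
  simp [seqC]

lemma seqC_succ (hℓ : 1 ≤ ℓ) : seqC (ℓ + 1) m = -2 :: (seqC ℓ m).map Neg.neg := by
  apply List.ext_getElem (by simp [seqC])
  rintro (_ | i) h _
  · simp [seqC]; omega
  · simp only [seqC, List.getElem_ofFn, List.getElem_cons_succ, List.getElem_map]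
    obtain ⟨ℓ, rfl⟩ : ∃ k, ℓ = k + 1 := ⟨ℓ - 1, by omega⟩
    by_cases hi : i = ℓ <;> simp [hi, pow_succ]

lemma seqD_two (k : ℕ) : seqD 2 (k + 2) = -3 :: altTwos k := by
  apply List.ext_getElem (by simp [seqD, altTwos]; omega)
  rintro (_ | i) h _
  · simp [seqD]
  · simp [seqD, altTwos, pow_succ]

lemma seqD_succ (hℓ : 2 ≤ ℓ) (hm : 1 ≤ m) :
    seqD (ℓ + 1) m = -2 :: (seqD ℓ m).map Neg.neg := by
  apply List.ext_getElem (by simp [seqD]; omega)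
  rintro (_ | i) h _
  · simp [seqD]; omega
  · simp only [seqD, List.getElem_ofFn, List.getElem_cons_succ, List.getElem_map]
    obtain ⟨ℓ, rfl⟩ : ∃ k, ℓ = k + 2 := ⟨ℓ - 2, by omega⟩
    by_cases hi : i = ℓ <;> simp [hi, pow_succ]

lemma cfTarget_mem_Ioo (hℓ : 2 ≤ ℓ) (hm : 2 ≤ m) : cfTarget ℓ m ∈ Set.Ioo (-1) 0 := by
  have hℓ' : (2 : ℚ) ≤ ℓ := by exact_mod_cast hℓ
  have hm' : (2 : ℚ) ≤ m := by exact_mod_cast hm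
  have hpos : 0 < (ℓ : ℚ) * m - 1 := by nlinarith
  rw [cfTarget, Set.mem_Ioo, lt_div_iff₀ hpos, div_neg_iff]
  constructor
  · linarith
  · right; constructor <;> nlinarith

lemma one_div_cfTarget_succ (hℓ : 1 ≤ ℓ) (hm : 2 ≤ m) :
    1 / cfTarget (ℓ + 1) m = -2 - cfTarget ℓ m := by
  have hℓ' : (1 : ℚ) ≤ ℓ := by exact_mod_cast hℓ
  have hm' : (2 : ℚ) ≤ m := by exact_mod_cast hm
  have h1 : (ℓ : ℚ) * m - 1 ≠ 0 := by nlinarith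
  have h2 : 1 - (ℓ : ℚ) * m ≠ 0 := by nlinarith
  have h3 : ((ℓ : ℚ) + 1) * m - 1 ≠ 0 := by nlinarith
  rw [cfTarget, cfTarget, one_div_div]
  push_cast
  rw [show (m : ℚ) - ((ℓ + 1) * m - 1) = 1 - ℓ * m by ring]
  field_simp
  ring

lemma one_div_cfTarget_two (k : ℕ) : 1 / cfTarget 2 (k + 2) = -3 + k / (k + 1) := by
  rw [cfTarget, one_div_div]
  push_cast
  rw [show (k + 2 : ℚ) - (2 * (k + 2) - 1) = -(k + 1) by ring, div_neg]
  field_simp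
  ring

lemma cf_seqC (hℓ : 1 ≤ ℓ) (hm : 2 ≤ m) : cf (seqC ℓ m) = cfTarget ℓ m := by
  induction ℓ, hℓ using Nat.le_induction with
  | base => simp [seqC_one, cf, cfTarget]
  | succ ℓ hℓ ih =>
    rw [seqC_succ hℓ, cf_cons, cf_map_neg, ih, eq_comm,
      ← one_div_one_div (cfTarget (ℓ + 1) m), one_div_cfTarget_succ hℓ hm]
    push_cast
    ring

lemma cf_seqD (hℓ : 2 ≤ ℓ) (hm : 2 ≤ m) : cf (seqD ℓ m) = cfTarget ℓ m := by
  induction ℓ, hℓ using Nat.le_induction with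
  | base =>
    obtain ⟨k, rfl⟩ : ∃ k, m = k + 2 := ⟨m - 2, by omega⟩
    rw [seqD_two, cf_cons, cf_altTwos, eq_comm, ← one_div_one_div (cfTarget 2 (k + 2)),
      one_div_cfTarget_two]
    push_cast
    ring
  | succ ℓ hℓ ih =>
    rw [seqD_succ hℓ (by omega), cf_cons, cf_map_neg, ih, eq_comm,
      ← one_div_one_div (cfTarget (ℓ + 1) m), one_div_cfTarget_succ (by omega) hm]
    push_cast
    ring

lemma eq_seqC_or_eq_seqD_two {L : List ℤ} (hm : 3 ≤ m) (hL : ∀ x ∈ L, 2 ≤ |x|)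
    (h : cf L = cfTarget 2 m) : L = seqC 2 m ∨ L = seqD 2 m := by
  obtain ⟨k, rfl⟩ : ∃ k, m = k + 2 := ⟨m - 2, by omega⟩
  cases L with
  | nil => exact absurd h.symm (cfTarget_mem_Ioo le_rfl (by omega)).2.ne
  | cons n T =>
    have hT := (List.forall_mem_cons.mp hL).2
    have hk₀ : (0 : ℚ) ≤ k / (k + 1) := by positivity
    have hk₁ : (k : ℚ) / (k + 1) < 1 := by rw [div_lt_one (by positivity)]; linarith
    have htail := cf_tail_eq h
    rw [one_div_cfTarget_two] at htail
    obtain ⟨h1, h2⟩ := head_mem_Ioo_of_cf_cons_eq (a := -4) (b := -1) hT h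
      (by rw [one_div_cfTarget_two]; push_cast; linarith)
      (by rw [one_div_cfTarget_two]; push_cast; linarith)
    obtain rfl | rfl : n = -3 ∨ n = -2 := by omega
    · right
      rw [seqD_two, eq_altTwos_of_cf_eq hT (by rw [htail]; push_cast; ring)]
    · left
      have hc : (2 : ℤ) ≤ |-((k + 2 : ℕ) - 1 : ℤ)| := by
        rw [abs_neg, abs_of_nonneg (by omega)]
        omega
      rw [seqC_succ le_rfl, seqC_one, eq_singleton_of_cf_eq hc hT ?_, List.map_singleton]
      rw [htail]
      push_cast
      rw [show -((k : ℚ) + 2 - 1) = -(k + 1) by ring]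
      field_simp
      ring

lemma eq_seqC_or_eq_seqD_of_cf_eq {L : List ℤ} (hℓ : 2 ≤ ℓ) (hm : 3 ≤ m)
    (hL : ∀ x ∈ L, 2 ≤ |x|) (h : cf L = cfTarget ℓ m) : L = seqC ℓ m ∨ L = seqD ℓ m := by
  induction ℓ, hℓ using Nat.le_induction generalizing L with
  | base => exact eq_seqC_or_eq_seqD_two hm hL h
  | succ ℓ hℓ ih =>
    cases L with
    | nil => exact absurd h.symm (cfTarget_mem_Ioo (by omega) (by omega)).2.ne
    | cons n T =>
      obtain ⟨hn, hT⟩ := List.forall_mem_cons.mp hL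
      obtain ⟨ht₁, ht₂⟩ := cfTarget_mem_Ioo hℓ (by omega : 2 ≤ m)
      have hv := one_div_cfTarget_succ (by omega : 1 ≤ ℓ) (by omega : 2 ≤ m)
      replace hn : n = -2 := by
        obtain ⟨h1, h2⟩ := head_mem_Ioo_of_cf_cons_eq (a := -3) (b := 0) hT h
          (by rw [hv]; push_cast; linarith) (by rw [hv]; push_cast; linarith)
        rw [le_abs'] at hn
        omega
      subst hn
      have htail : cf (T.map Neg.neg) = cfTarget ℓ m := by
        rw [cf_map_neg, cf_tail_eq h, hv]
        push_cast
        ring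
      rcases ih (forall_mem_map_neg.mpr hT) htail with hC | hD
      · exact .inl (by rw [seqC_succ (by omega), ← map_neg_eq_iff.mp hC])
      · exact .inr (by rw [seqD_succ hℓ (by omega), ← map_neg_eq_iff.mp hD])

end

/-- For `ℓ, m ≥ 3`, `α = ℓm−1`, `β = m`: a sequence of integers all of absolute value
at least `2` has continued fraction value `(β−α)/α` iff it is the length-`ℓ` sequence
`C` with `C_i = (−1)^i·2` for `1 ≤ i ≤ ℓ−1` and `C_ℓ = (−1)^{ℓ−1}·(m−1)`, or the
length-`(ℓ+m−3)` sequence `D` with `D_i = (−1)^i·2` for `i ≠ ℓ−1` and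
`D_{ℓ−1} = (−1)^{ℓ−1}·3`. -/
theorem cf_eq_iff_C_or_D (ℓ m : ℕ) (hℓ : 3 ≤ ℓ) (hm : 3 ≤ m)
    (L : List ℤ) (hL : ∀ n ∈ L, 2 ≤ |n|) :
    cf L = ((m : ℚ) - ((ℓ : ℚ) * m - 1)) / ((ℓ : ℚ) * m - 1) ↔
      L = List.ofFn (fun j : Fin ℓ =>
            if (j : ℕ) = ℓ - 1 then (-1) ^ (ℓ - 1) * ((m : ℤ) - 1)
            else (-1) ^ ((j : ℕ) + 1) * 2) ∨
      L = List.ofFn (fun j : Fin (ℓ + m - 3) =>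
            if (j : ℕ) = ℓ - 2 then (-1) ^ (ℓ - 1) * 3
            else (-1) ^ ((j : ℕ) + 1) * 2) := by
  constructor
  · exact eq_seqC_or_eq_seqD_of_cf_eq (by omega) hm hL
  · rintro (rfl | rfl)
    · exact cf_seqC (by omega) (by omega)
    · exact cf_seqD (by omega) (by omega)
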